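/- Let p ∈ (0,1), T_c > 0, and a > 0. Let V : ℝ → ℝ be differentiable with V(t) ≥ 0 for all t ≥ 0, and suppose that for all t ≥ 0 the derivative satisfies V'(t) ≤ -(1/(p·T_c))·e^{a·V(t)^p}·V(t)^{1-p}. Then V(t) = 0 for every t ≥ T_c/a. (Predefined-time stability: the settling time is bounded by T_max = T_c/a independently of the initial condition V(0).) -/

import Mathlib

/-!
Along a positive solution, `W = exp (-a V^p)` satisfies
`W' = -a p V^(p-1) e^{-a V^p} V' ≥ a / T_c`, because the factor `V^(p-1) e^{-a V^p}` exactly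
cancels `e^{a V^p} V^(1-p)` in the bound on `V'`. Since `0 < W ≤ 1`, `W` can grow at rate `a / T_c`
for less than `T_c / a` units of time, so `V` cannot stay positive up to `T_c / a`; being
nonincreasing and nonnegative, it vanishes from then on.
-/

open Real Set

lemma neg_one_div_mul_exp_mul_rpow_nonpos {p c a v : ℝ} (hpc : 0 ≤ p * c) (hv : 0 ≤ v) :
    -(1 / (p * c)) * exp (a * v ^ p) * v ^ (1 - p) ≤ 0 := by
  rw [neg_mul, neg_mul, neg_nonpos]
  positivity

lemma hasDerivAt_exp_neg_mul_rpow {V : ℝ → ℝ} {V' t : ℝ} (a p : ℝ) (hV : HasDerivAt V V' t)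
    (ht : V t ≠ 0) :
    HasDerivAt (fun s => exp (-(a * V s ^ p)))
      (-(a * p) * V t ^ (p - 1) * exp (-(a * V t ^ p)) * V') t := by
  refine (((hV.rpow_const (p := p) (Or.inl ht)).const_mul a).neg.exp).congr_deriv ?_
  change exp (-(a * V t ^ p)) * _ = _
  ring

lemma div_le_neg_mul_rpow_mul_exp_mul {p c a v d : ℝ} (hp : 0 < p) (hc : 0 < c) (ha : 0 ≤ a)
    (hv : 0 < v) (hd : d ≤ -(1 / (p * c)) * exp (a * v ^ p) * v ^ (1 - p)) :
    a / c ≤ -(a * p) * v ^ (p - 1) * exp (-(a * v ^ p)) * d := by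
  have hrpow : v ^ (p - 1) * v ^ (1 - p) = 1 := by rw [← rpow_add hv]; simp
  have hexp : exp (-(a * v ^ p)) * exp (a * v ^ p) = 1 := by rw [← exp_add]; simp
  calc a / c
      = a * p * v ^ (p - 1) * exp (-(a * v ^ p)) *
          (1 / (p * c) * exp (a * v ^ p) * v ^ (1 - p)) := by
        field_simp
        linear_combination (-(a * v ^ (p - 1) * v ^ (1 - p))) * hexp - a * hrpow
    _ ≤ a * p * v ^ (p - 1) * exp (-(a * v ^ p)) * -d :=
        mul_le_mul_of_nonneg_left (by linarith) (by positivity)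
    _ = -(a * p) * v ^ (p - 1) * exp (-(a * v ^ p)) * d := by ring

lemma lt_div_of_pos_of_deriv_le_neg_exp_mul_rpow {V : ℝ → ℝ} {p c a T : ℝ}
    (hV : Differentiable ℝ V) (hp : 0 < p) (hc : 0 < c) (ha : 0 < a) (hT : 0 ≤ T)
    (hpos : ∀ t ∈ Icc 0 T, 0 < V t)
    (hdV : ∀ t ∈ Ioo 0 T, deriv V t ≤ -(1 / (p * c)) * exp (a * V t ^ p) * V t ^ (1 - p)) :
    T < c / a := by
  set W : ℝ → ℝ := fun s => exp (-(a * V s ^ p))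
  have hW : ∀ t ∈ interior (Icc 0 T), HasDerivAt W
      (-(a * p) * V t ^ (p - 1) * exp (-(a * V t ^ p)) * deriv V t) t := fun t ht =>
    hasDerivAt_exp_neg_mul_rpow a p (hV t).hasDerivAt (hpos t (interior_subset ht)).ne'
  have hWcont : Continuous W :=
    (continuous_const.mul (hV.continuous.rpow_const fun _ => Or.inr hp.le)).neg.rexp
  have hgrowth : a / c * (T - 0) ≤ W T - W 0 :=
    (convex_Icc 0 T).mul_sub_le_image_sub_of_le_deriv hWcont.continuousOn
      (fun t ht => (hW t ht).differentiableAt.differentiableWithinAt)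
      (fun t ht => (hW t ht).deriv ▸ div_le_neg_mul_rpow_mul_exp_mul hp hc ha.le
        (hpos t (interior_subset ht)) (hdV t (by rwa [interior_Icc] at ht)))
      0 (left_mem_Icc.2 hT) T (right_mem_Icc.2 hT) hT
  have hWT : W T ≤ 1 := by
    have := hpos T (right_mem_Icc.2 hT)
    exact exp_le_one_iff.2 (neg_nonpos.2 (by positivity))
  have hW0 : 0 < W 0 := exp_pos _
  rw [lt_div_iff₀ ha]
  rw [sub_zero, div_mul_eq_mul_div, div_le_iff₀ hc] at hgrowth
  nlinarith

theorem predefined_time_stability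
    (p T_c a : ℝ) (hp : p ∈ Set.Ioo (0 : ℝ) 1) (hT : 0 < T_c) (ha : 0 < a)
    (V : ℝ → ℝ) (hV : Differentiable ℝ V) (hVnn : ∀ t ≥ 0, 0 ≤ V t)
    (hdV : ∀ t ≥ 0, deriv V t ≤
      -(1 / (p * T_c)) * Real.exp (a * (V t) ^ p) * (V t) ^ (1 - p)) :
    ∀ t ≥ T_c / a, V t = 0 := by
  have hTa : 0 ≤ T_c / a := by positivity
  have hanti : AntitoneOn V (Ici 0) :=
    antitoneOn_of_deriv_nonpos (convex_Ici 0) hV.continuous.continuousOn hV.differentiableOn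
      fun t ht => (hdV t (interior_subset ht)).trans
        (neg_one_div_mul_exp_mul_rpow_nonpos (mul_pos hp.1 hT).le (hVnn t (interior_subset ht)))
  suffices V (T_c / a) = 0 from fun t ht =>
    le_antisymm (this ▸ hanti hTa (hTa.trans ht) ht) (hVnn t (hTa.trans ht))
  by_contra hne
  have hVpos : 0 < V (T_c / a) := (hVnn _ hTa).lt_of_ne' hne
  exact lt_irrefl _ <| lt_div_of_pos_of_deriv_le_neg_exp_mul_rpow hV hp.1 hT ha hTa
    (fun t ht => hVpos.trans_le (hanti ht.1 hTa ht.2)) (fun t ht => hdV t ht.1.le)
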